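/- arXiv:1410.5062 — 3 statements merged into one kernel-verified Lean document; each statement's English description precedes it below -/
import Mathlib

section
/- Let G be a finite directed graph, r a node of G, and k ≥ 1. Suppose G has at least one out-tree rooted at r with exactly k internal nodes, and let T be such an out-tree having the minimal number of leaves among all out-trees of G rooted at r with exactly k internal nodes. Then T contains no leaf whose father has another child; that is, for every leaf u of T, the unique in-neighbor of u in T has out-degree exactly 1 in T. -/
variable {V : Type*}

/-- The node set of a rooted set `A` of directed edges with root `r`: the root together
with all endpoints of edges of `A`. -/
def otNodes [DecidableEq V] (A : Finset (V × V)) (r : V) : Finset V :=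
  insert r (A.image Prod.fst ∪ A.image Prod.snd)

/-- `A` is the edge set of an out-tree rooted at `r`: edges join distinct nodes, the root
has in-degree `0`, every other node has in-degree exactly `1`, and every node is
reachable from the root along directed edges.  (This is equivalent to: the underlying
undirected graph is a tree and `r` is the unique node of in-degree `0`.) -/
structure IsOutTree [DecidableEq V] (A : Finset (V × V)) (r : V) : Prop where
  ne : ∀ e ∈ A, e.1 ≠ e.2
  root_no_in : ∀ e ∈ A, e.2 ≠ r
  in_unique : ∀ v ∈ otNodes A r, v ≠ r → (A.filter fun e => e.2 = v).card = 1
  reach : ∀ v ∈ otNodes A r, Relation.ReflTransGen (fun a b => (a, b) ∈ A) r v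

/-- The number of internal nodes (nodes of out-degree at least `1`) of the out-tree with
edge set `A` and root `r`. -/
def internalCount [DecidableEq V] (A : Finset (V × V)) (r : V) : ℕ :=
  ((otNodes A r).filter fun v => (A.filter fun e => e.1 = v).Nonempty).card

/-- The number of leaves (nodes of out-degree `0`) of the out-tree with edge set `A`
and root `r`. -/
def leafCount [DecidableEq V] (A : Finset (V × V)) (r : V) : ℕ :=
  ((otNodes A r).filter fun v => A.filter (fun e => e.1 = v) = ∅).card

/-- `A` is (the edge set of) an out-tree of the digraph `G` rooted at `r`. -/
def IsOutTreeOf [DecidableEq V] (G : V → V → Prop) (A : Finset (V × V)) (r : V) : Prop :=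
  (∀ e ∈ A, G e.1 e.2) ∧ IsOutTree A r

/-- `A` is (the edge set of) an out-branching of `G` rooted at `r`: an out-tree of `G`
rooted at `r` whose node set is all of `V`. -/
def IsOutBranchingOf [DecidableEq V] [Fintype V] (G : V → V → Prop) (A : Finset (V × V))
    (r : V) : Prop :=
  IsOutTreeOf G A r ∧ otNodes A r = Finset.univ

/-- The two nodes of a directed edge. -/
def pairNodes [DecidableEq V] (e : V × V) : Finset V := {e.1, e.2}

/-- `P` is a collection of pairwise node-disjoint directed paths on two nodes in `G`
(each such path being a directed edge of `G` with distinct endpoints). -/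
def IsDisjointTwoPaths [DecidableEq V] (G : V → V → Prop) (P : Finset (V × V)) : Prop :=
  (∀ e ∈ P, G e.1 e.2 ∧ e.1 ≠ e.2) ∧
  ∀ e ∈ P, ∀ e' ∈ P, e ≠ e' → Disjoint (pairNodes e) (pairNodes e')

/-! Deleting the edge into a leaf `u` whose father has a second child keeps an out-tree of
the same digraph with the same internal nodes (the father stays internal) but with one leaf
fewer, namely without `u`. So a leaf-minimal tree has no such leaf. -/

section LeafDeletion

variable [DecidableEq V] {A : Finset (V × V)} {r : V} {e : V × V}

theorem mem_otNodes {v : V} :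
    v ∈ otNodes A r ↔ v = r ∨ (∃ x ∈ A, x.1 = v) ∨ ∃ x ∈ A, x.2 = v := by
  simp [otNodes]

theorem IsOutTree.eq_of_snd_eq (h : IsOutTree A r) {x y : V × V} (hx : x ∈ A) (hy : y ∈ A)
    (hxy : x.2 = y.2) : x = y := by
  have hy_mem : y.2 ∈ otNodes A r := mem_otNodes.2 (Or.inr (Or.inr ⟨y, hy, rfl⟩))
  exact Finset.card_le_one.1 (h.in_unique _ hy_mem (h.root_no_in y hy)).le x
    (Finset.mem_filter.2 ⟨hx, hxy⟩) y (Finset.mem_filter.2 ⟨hy, rfl⟩)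

theorem IsOutTree.otNodes_erase_of_isLeaf (h : IsOutTree A r) (he : e ∈ A)
    (hleaf : ∀ x ∈ A, x.1 ≠ e.2) : otNodes (A.erase e) r = (otNodes A r).erase e.2 := by
  ext v
  simp only [Finset.mem_erase, mem_otNodes]
  constructor
  · rintro (rfl | ⟨x, ⟨-, hx⟩, rfl⟩ | ⟨x, ⟨hxe, hx⟩, rfl⟩)
    · exact ⟨fun hr => h.root_no_in e he hr.symm, Or.inl rfl⟩
    · exact ⟨hleaf x hx, Or.inr (Or.inl ⟨x, hx, rfl⟩)⟩
    · exact ⟨fun hxu => hxe (h.eq_of_snd_eq hx he hxu), Or.inr (Or.inr ⟨x, hx, rfl⟩)⟩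
  · rintro ⟨hvu, rfl | ⟨x, hx, rfl⟩ | ⟨x, hx, rfl⟩⟩
    · exact Or.inl rfl
    · by_cases hxe : x = e
      · subst hxe
        -- the father of the deleted leaf is the root or keeps its own in-edge
        by_cases hxr : x.1 = r
        · exact Or.inl hxr
        have hx_mem : x.1 ∈ otNodes A r := mem_otNodes.2 (Or.inr (Or.inl ⟨x, hx, rfl⟩))
        obtain ⟨y, hy⟩ := Finset.card_pos.1 (h.in_unique _ hx_mem hxr).ge
        obtain ⟨hyA, hyx⟩ := Finset.mem_filter.1 hy
        refine Or.inr (Or.inr ⟨y, ⟨?_, hyA⟩, hyx⟩)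
        rintro rfl
        exact h.ne y hyA hyx.symm
      · exact Or.inr (Or.inl ⟨x, ⟨hxe, hx⟩, rfl⟩)
    · exact Or.inr (Or.inr ⟨x, ⟨fun hxe => hvu (hxe ▸ rfl), hx⟩, rfl⟩)

theorem IsOutTree.erase_of_isLeaf (h : IsOutTree A r) (he : e ∈ A)
    (hleaf : ∀ x ∈ A, x.1 ≠ e.2) : IsOutTree (A.erase e) r where
  ne x hx := h.ne x (Finset.mem_of_mem_erase hx)
  root_no_in x hx := h.root_no_in x (Finset.mem_of_mem_erase hx)
  in_unique v hv hvr := by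
    rw [h.otNodes_erase_of_isLeaf he hleaf, Finset.mem_erase] at hv
    rw [Finset.filter_erase, Finset.erase_eq_of_notMem, h.in_unique v hv.2 hvr]
    exact fun hmem => hv.1 (Finset.mem_filter.1 hmem).2.symm
  reach v hv := by
    rw [h.otNodes_erase_of_isLeaf he hleaf, Finset.mem_erase] at hv
    -- a path from the root avoiding the leaf `e.2` never uses `e`
    suffices ∀ w, Relation.ReflTransGen (fun a b => (a, b) ∈ A) r w → w ≠ e.2 →
        Relation.ReflTransGen (fun a b => (a, b) ∈ A.erase e) r w from
      this v (h.reach v hv.2) hv.1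
    intro w hw
    induction hw with
    | refl => exact fun _ => .refl
    | @tail b c _ hbc ih =>
      intro hc
      exact (ih (hleaf (b, c) hbc)).tail
        (Finset.mem_erase.2 ⟨fun hbce => hc (hbce ▸ rfl), hbc⟩)

theorem filter_fst_erase_nonempty_iff {e' : V × V} (he' : e' ∈ A) (he'e : e' ≠ e)
    (hfst : e'.1 = e.1) (v : V) :
    ((A.erase e).filter fun x => x.1 = v).Nonempty ↔ (A.filter fun x => x.1 = v).Nonempty := by
  rw [Finset.filter_erase]
  refine ⟨fun hne => hne.mono (Finset.erase_subset _ _), fun ⟨x, hx⟩ => ?_⟩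
  obtain ⟨hxA, rfl⟩ := Finset.mem_filter.1 hx
  by_cases hxe : x = e
  · exact ⟨e', Finset.mem_erase.2 ⟨he'e, Finset.mem_filter.2 ⟨he', hxe ▸ hfst⟩⟩⟩
  · exact ⟨x, Finset.mem_erase.2 ⟨hxe, hx⟩⟩

variable {e' : V × V}

theorem IsOutTree.internalCount_erase_of_isLeaf (h : IsOutTree A r) (he : e ∈ A)
    (hleaf : ∀ x ∈ A, x.1 ≠ e.2) (he' : e' ∈ A) (he'e : e' ≠ e) (hfst : e'.1 = e.1) :
    internalCount (A.erase e) r = internalCount A r := by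
  unfold internalCount
  simp only [filter_fst_erase_nonempty_iff he' he'e hfst]
  rw [h.otNodes_erase_of_isLeaf he hleaf, Finset.filter_erase, Finset.erase_eq_of_notMem]
  exact fun hu => Finset.not_nonempty_iff_eq_empty.2 (Finset.filter_eq_empty_iff.2 hleaf)
    (Finset.mem_filter.1 hu).2

theorem IsOutTree.leafCount_erase_of_isLeaf (h : IsOutTree A r) (he : e ∈ A)
    (hleaf : ∀ x ∈ A, x.1 ≠ e.2) (he' : e' ∈ A) (he'e : e' ≠ e) (hfst : e'.1 = e.1) :
    leafCount (A.erase e) r + 1 = leafCount A r := by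
  unfold leafCount
  simp only [← Finset.not_nonempty_iff_eq_empty, filter_fst_erase_nonempty_iff he' he'e hfst]
  rw [h.otNodes_erase_of_isLeaf he hleaf, Finset.filter_erase, Finset.card_erase_add_one]
  exact Finset.mem_filter.2 ⟨mem_otNodes.2 (Or.inr (Or.inr ⟨e, he, rfl⟩)),
    Finset.not_nonempty_iff_eq_empty.2 (Finset.filter_eq_empty_iff.2 hleaf)⟩

end LeafDeletion

theorem stmt5_general [DecidableEq V] (G : V → V → Prop) (r : V) (k : ℕ)
    (T : Finset (V × V)) (hT : IsOutTreeOf G T r) (hTint : internalCount T r = k)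
    (hmin : ∀ T' : Finset (V × V), IsOutTreeOf G T' r → internalCount T' r = k →
      leafCount T r ≤ leafCount T' r) :
    ∀ u ∈ otNodes T r, T.filter (fun e => e.1 = u) = ∅ →
      ∀ e ∈ T, e.2 = u → (T.filter fun e' => e'.1 = e.1).card = 1 := by
  rintro u - hleaf e he rfl
  obtain ⟨hTG, hTT⟩ := hT
  have hleaf : ∀ x ∈ T, x.1 ≠ e.2 := Finset.filter_eq_empty_iff.1 hleaf
  by_contra hcard
  have hsiblings : 1 < (T.filter fun x => x.1 = e.1).card := by
    have : 0 < (T.filter fun x => x.1 = e.1).card :=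
      Finset.card_pos.2 ⟨e, Finset.mem_filter.2 ⟨he, rfl⟩⟩
    omega
  obtain ⟨e', he'f, he'e⟩ := Finset.exists_mem_ne hsiblings e
  obtain ⟨he', hfst⟩ := Finset.mem_filter.1 he'f
  have hless := hTT.leafCount_erase_of_isLeaf he hleaf he' he'e hfst
  have hT' : IsOutTreeOf G (T.erase e) r :=
    ⟨fun x hx => hTG x (Finset.mem_of_mem_erase hx), hTT.erase_of_isLeaf he hleaf⟩
  have hle := hmin _ hT' (hTT.internalCount_erase_of_isLeaf he hleaf he' he'e hfst ▸ hTint)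
  omega

theorem stmt5 [DecidableEq V] (G : V → V → Prop) (r : V) (k : ℕ) (hk : 1 ≤ k)
    (T : Finset (V × V)) (hT : IsOutTreeOf G T r) (hTint : internalCount T r = k)
    (hmin : ∀ T' : Finset (V × V), IsOutTreeOf G T' r → internalCount T' r = k →
      leafCount T r ≤ leafCount T' r) :
    ∀ u ∈ otNodes T r, T.filter (fun e => e.1 = u) = ∅ →
      ∀ e ∈ T, e.2 = u → (T.filter fun e' => e'.1 = e.1).card = 1 :=
  stmt5_general G r k T hT hTint hmin
end

section
/- Let G be a finite directed graph, r a node of G, and k ≥ 1. Then G has an out-tree rooted at r with exactly k internal nodes and at most k leaves if and only if G has an out-tree rooted at r with at least k internal nodes. -/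
variable {V : Type*}

/-! The internal nodes of an out-tree are exactly the tails of its edges. Among the subtrees of a
given out-tree with at least `k` internal nodes, take one with fewest edges. Pruning a leaf keeps an
out-tree and loses at most one internal node, and none if the leaf has a sibling; so by minimality
the subtree has exactly `k` internal nodes and no leaf has a sibling. Then sending each leaf to its
parent is injective, which bounds the number of leaves by `k`. -/

section OutTree

variable [DecidableEq V] {A : Finset (V × V)} {r : V} {e : V × V}

lemma mem_otNodes_s8 {w : V} :
    w ∈ otNodes A r ↔ w = r ∨ w ∈ A.image Prod.fst ∨ w ∈ A.image Prod.snd := by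
  simp only [otNodes, Finset.mem_insert, Finset.mem_union]

lemma internalCount_eq_card_image_fst : internalCount A r = (A.image Prod.fst).card := by
  unfold internalCount
  congr 1
  ext v
  simp only [Finset.mem_filter, Finset.filter_nonempty_iff, Finset.mem_image, otNodes,
    Finset.mem_insert, Finset.mem_union]
  aesop

lemma leafCount_eq_card_filter :
    leafCount A r = ((otNodes A r).filter fun v => ∀ f ∈ A, f.1 ≠ v).card := by
  simp only [leafCount, Finset.filter_eq_empty_iff]

lemma internalCount_le_internalCount_erase_add_one :
    internalCount A r ≤ internalCount (A.erase e) r + 1 := by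
  simp only [internalCount_eq_card_image_fst]
  calc (A.image Prod.fst).card ≤ ((insert e (A.erase e)).image Prod.fst).card :=
        Finset.card_le_card (Finset.image_subset_image (Finset.insert_erase_subset e A))
    _ ≤ _ := by
      rw [Finset.image_insert]
      exact Finset.card_insert_le _ _

lemma internalCount_erase_of_sibling {f : V × V} (hf : f ∈ A) (hfe : f ≠ e)
    (hfst : f.1 = e.1) :
    internalCount (A.erase e) r = internalCount A r := by
  simp only [internalCount_eq_card_image_fst]
  congr 1
  refine (Finset.image_subset_image (Finset.erase_subset e A)).antisymm fun v hv => ?_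
  obtain ⟨g, hg, rfl⟩ := Finset.mem_image.1 hv
  rcases eq_or_ne g e with rfl | hge
  · exact Finset.mem_image.2 ⟨f, Finset.mem_erase.2 ⟨hfe, hf⟩, hfst⟩
  · exact Finset.mem_image_of_mem _ (Finset.mem_erase.2 ⟨hge, hg⟩)

/-- A path cannot continue past the leaf `e.2`, so it only uses `e` if it ends at `e.2`. -/
lemma reach_erase_of_leaf_edge (hleaf : ∀ f ∈ A, f.1 ≠ e.2) {w : V}
    (hw : Relation.ReflTransGen (fun a b => (a, b) ∈ A) r w) (hwe : w ≠ e.2) :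
    Relation.ReflTransGen (fun a b => (a, b) ∈ A.erase e) r w := by
  induction hw with
  | refl => exact .refl
  | @tail a b _ hab ih =>
    exact (ih (hleaf (a, b) hab)).tail (Finset.mem_erase.2 ⟨fun hbe => hwe (hbe ▸ rfl), hab⟩)

namespace IsOutTree

lemma snd_injOn (h : IsOutTree A r) : Set.InjOn Prod.snd (A : Set (V × V)) := by
  intro e he f hf hef
  have hcard := h.in_unique e.2 (mem_otNodes_s8.2 (Or.inr (Or.inr (Finset.mem_image_of_mem _ he))))
    (h.root_no_in e he)
  exact Finset.card_le_one.1 hcard.le e (Finset.mem_filter.2 ⟨he, rfl⟩) f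
    (Finset.mem_filter.2 ⟨hf, hef.symm⟩)

lemma root_mem_image_fst (h : IsOutTree A r) (hA : A.Nonempty) : r ∈ A.image Prod.fst := by
  obtain ⟨e, he⟩ := hA
  rcases (h.reach e.2 (mem_otNodes_s8.2 (Or.inr (Or.inr (Finset.mem_image_of_mem _ he))))).cases_head
    with hre | ⟨x, hx, -⟩
  · exact absurd hre.symm (h.root_no_in e he)
  · exact Finset.mem_image.2 ⟨(r, x), hx, rfl⟩

/-- Heads of edges are distinct and differ from the root, which is a tail; so if every head were a
tail there would be more tails than edges. -/
lemma exists_leaf_edge (h : IsOutTree A r) (hA : A.Nonempty) :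
    ∃ e ∈ A, ∀ f ∈ A, f.1 ≠ e.2 := by
  by_contra! hcon
  have hsub : insert r (A.image Prod.snd) ⊆ A.image Prod.fst := by
    refine Finset.insert_subset (h.root_mem_image_fst hA) fun v hv => ?_
    obtain ⟨e, he, rfl⟩ := Finset.mem_image.1 hv
    obtain ⟨f, hf, hfe⟩ := hcon e he
    exact Finset.mem_image.2 ⟨f, hf, hfe⟩
  have hr : r ∉ A.image Prod.snd := fun hmem => by
    obtain ⟨e, he, hre⟩ := Finset.mem_image.1 hmem
    exact h.root_no_in e he hre
  have := Finset.card_le_card hsub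
  rw [Finset.card_insert_of_notMem hr, Finset.card_image_of_injOn h.snd_injOn] at this
  have := Finset.card_image_le (s := A) (f := Prod.fst)
  omega

lemma otNodes_erase_subset (h : IsOutTree A r) (he : e ∈ A) (hleaf : ∀ f ∈ A, f.1 ≠ e.2) :
    otNodes (A.erase e) r ⊆ (otNodes A r).erase e.2 := by
  intro w hw
  have hsub := Finset.image_subset_image (f := Prod.fst) (Finset.erase_subset e A)
  have hsub' := Finset.image_subset_image (f := Prod.snd) (Finset.erase_subset e A)
  refine Finset.mem_erase.2 ⟨?_, ?_⟩
  · rintro rfl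
    rcases mem_otNodes_s8.1 hw with hr | hfst | hsnd
    · exact h.root_no_in e he hr
    · obtain ⟨f, hf, hfw⟩ := Finset.mem_image.1 hfst
      exact hleaf f (Finset.mem_of_mem_erase hf) hfw
    · obtain ⟨f, hf, hfw⟩ := Finset.mem_image.1 hsnd
      obtain ⟨hfe, hf⟩ := Finset.mem_erase.1 hf
      exact hfe (h.snd_injOn hf he hfw)
  · rcases mem_otNodes_s8.1 hw with hr | hfst | hsnd
    · exact mem_otNodes_s8.2 (Or.inl hr)
    · exact mem_otNodes_s8.2 (Or.inr (Or.inl (hsub hfst)))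
    · exact mem_otNodes_s8.2 (Or.inr (Or.inr (hsub' hsnd)))

lemma erase_leaf_edge (h : IsOutTree A r) (he : e ∈ A) (hleaf : ∀ f ∈ A, f.1 ≠ e.2) :
    IsOutTree (A.erase e) r where
  ne f hf := h.ne f (Finset.mem_of_mem_erase hf)
  root_no_in f hf := h.root_no_in f (Finset.mem_of_mem_erase hf)
  in_unique w hw hwr := by
    obtain ⟨hwe, hwA⟩ := Finset.mem_erase.1 (h.otNodes_erase_subset he hleaf hw)
    rw [Finset.filter_erase,
      Finset.erase_eq_of_notMem fun hmem => hwe (Finset.mem_filter.1 hmem).2.symm]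
    exact h.in_unique w hwA hwr
  reach w hw := by
    obtain ⟨hwe, hwA⟩ := Finset.mem_erase.1 (h.otNodes_erase_subset he hleaf hw)
    exact reach_erase_of_leaf_edge hleaf (h.reach w hwA) hwe

lemma leafCount_le_internalCount (h : IsOutTree A r) (hA : A.Nonempty)
    (hsib : ∀ e ∈ A, (∀ f ∈ A, f.1 ≠ e.2) → ∀ f ∈ A, f.1 = e.1 → f = e) :
    leafCount A r ≤ internalCount A r := by
  set L := A.filter fun e => ∀ f ∈ A, f.1 ≠ e.2
  have hleaves : ((otNodes A r).filter fun v => ∀ f ∈ A, f.1 ≠ v) ⊆ L.image Prod.snd := by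
    intro v hv
    obtain ⟨hvA, hvleaf⟩ := Finset.mem_filter.1 hv
    have hvfst : v ∉ A.image Prod.fst := fun hmem => by
      obtain ⟨f, hf, hfv⟩ := Finset.mem_image.1 hmem
      exact hvleaf f hf hfv
    rcases mem_otNodes_s8.1 hvA with rfl | hfst | hsnd
    · exact absurd (h.root_mem_image_fst hA) hvfst
    · exact absurd hfst hvfst
    · obtain ⟨e, he, rfl⟩ := Finset.mem_image.1 hsnd
      exact Finset.mem_image_of_mem _ (Finset.mem_filter.2 ⟨he, hvleaf⟩)
  have hinj : Set.InjOn Prod.fst (L : Set (V × V)) := by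
    intro e he f hf hef
    obtain ⟨he, hleaf⟩ := Finset.mem_filter.1 he
    exact (hsib e he hleaf f (Finset.mem_filter.1 hf).1 hef.symm).symm
  rw [leafCount_eq_card_filter, internalCount_eq_card_image_fst]
  calc _ ≤ (L.image Prod.snd).card := Finset.card_le_card hleaves
    _ ≤ L.card := Finset.card_image_le
    _ = (L.image Prod.fst).card := (Finset.card_image_of_injOn hinj).symm
    _ ≤ (A.image Prod.fst).card :=
      Finset.card_le_card (Finset.image_subset_image (Finset.filter_subset _ _))

theorem exists_subset_internalCount_eq (h : IsOutTree A r) {k : ℕ} (hk : 1 ≤ k)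
    (hkA : k ≤ internalCount A r) :
    ∃ B ⊆ A, IsOutTree B r ∧ internalCount B r = k ∧ leafCount B r ≤ k := by
  classical
  obtain ⟨B, hB, hmin⟩ := Finset.exists_min_image
    (A.powerset.filter fun B => IsOutTree B r ∧ k ≤ internalCount B r) Finset.card
    ⟨A, Finset.mem_filter.2 ⟨Finset.mem_powerset_self A, h, hkA⟩⟩
  obtain ⟨hBA, hB, hkB⟩ : B ⊆ A ∧ IsOutTree B r ∧ k ≤ internalCount B r := by
    simpa only [Finset.mem_filter, Finset.mem_powerset] using hB
  have hBne : B.Nonempty := by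
    rw [internalCount_eq_card_image_fst] at hkB
    exact Finset.image_nonempty.1 (Finset.card_pos.1 (lt_of_lt_of_le hk hkB))
  have hdrop : ∀ e ∈ B, (∀ f ∈ B, f.1 ≠ e.2) → internalCount (B.erase e) r < k := by
    intro e he hleaf
    by_contra! hk'
    have := hmin (B.erase e) (Finset.mem_filter.2 ⟨Finset.mem_powerset.2
      ((Finset.erase_subset e B).trans hBA), hB.erase_leaf_edge he hleaf, hk'⟩)
    exact (Finset.card_erase_lt_of_mem he).not_ge this
  obtain ⟨e, he, hleaf⟩ := hB.exists_leaf_edge hBne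
  have hBk : internalCount B r = k := by
    have := hdrop e he hleaf
    have := internalCount_le_internalCount_erase_add_one (A := B) (r := r) (e := e)
    omega
  refine ⟨B, hBA, hB, hBk, hBk ▸ hB.leafCount_le_internalCount hBne ?_⟩
  intro e he hleaf f hf hfe
  by_contra hne
  have := hdrop e he hleaf
  rw [internalCount_erase_of_sibling hf hne hfe] at this
  omega

end IsOutTree
end OutTree

theorem stmt8 [DecidableEq V] (G : V → V → Prop) (r : V) (k : ℕ) (hk : 1 ≤ k) :
    (∃ T : Finset (V × V), IsOutTreeOf G T r ∧
        internalCount T r = k ∧ leafCount T r ≤ k) ↔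
    (∃ T : Finset (V × V), IsOutTreeOf G T r ∧ k ≤ internalCount T r) := by
  constructor
  · rintro ⟨T, hT, hTk, -⟩
    exact ⟨T, hT, hTk.ge⟩
  · rintro ⟨T, ⟨hTG, hT⟩, hkT⟩
    obtain ⟨B, hBT, hB, hBk, hBleaf⟩ := hT.exists_subset_internalCount_eq hk hkT
    exact ⟨B, ⟨fun e he => hTG e (hBT he), hB⟩, hBk, hBleaf⟩
end

section
/- Let G = (V,E) be a finite undirected graph, k ≥ 1, and let S_1,…,S_{k−1} be a (k−1)-packing in G with node set X = V_1 ∪ … ∪ V_{k−1}; set Y = V∖X. Then G has a k-packing if and only if there exist natural numbers p ∈ {3, 4, …, 3k − ⌈5(k−1)/2⌉} and q ∈ {⌈p/3⌉, …, p} and a k-packing in G that contains exactly p nodes from Y and has exactly q paths each of which contains at least one node from Y. -/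
/-!
Only `→` needs an argument. Among all `k`-packings take one, `Q`, of maximal weight
`∑ᵢ (2 |V(Qᵢ) ∩ X| + [Qᵢ is a path of P])`. Exchanging single paths of `Q` shows that every path
`Sₗ` of `P` keeps at least two of its nodes in `V(Q)`. If it keeps exactly two, its uncovered node
`z` has a neighbour `y` on `Sₗ`, lying on some path `Qᵢ = {y, n, d}` with `n ~ y`; rerouting `Qᵢ`
to `n - y - z` costs no weight, which forces `d ∈ X`, `d ∉ Sₗ`, and keeps the packing optimal, so
the path `Sₗ'` through `d` lies entirely in `V(Q)`. Distinct deficient paths give distinct `Sₗ'`,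
hence `2 |V(Q) ∩ X| ≥ 5 (k - 1)`, which bounds `p = |V(Q) ∩ Y|`; each of the `q` paths meeting
`Y` contributes between one and three of these `p` nodes.
-/

variable {V : Type*}

/-- The node set of a triple of vertices. -/
def tripleNodes [DecidableEq V] (p : V × V × V) : Finset V := {p.1, p.2.1, p.2.2}

/-- `P` is a `t`-packing of the undirected graph `G`: `t` pairwise node-disjoint simple
paths, each on exactly `3` nodes (the `i`-th path visiting the three distinct nodes of the
triple `P i` in order). -/
def IsP2Packing [DecidableEq V] (G : SimpleGraph V) (t : ℕ) (P : Fin t → V × V × V) : Prop :=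
  (∀ i, (tripleNodes (P i)).card = 3 ∧
    G.Adj (P i).1 (P i).2.1 ∧ G.Adj (P i).2.1 (P i).2.2) ∧
  ∀ i j, i ≠ j → Disjoint (tripleNodes (P i)) (tripleNodes (P j))

open Finset

section

open Function

variable [DecidableEq V] {G : SimpleGraph V} {m k : ℕ}

lemma card_triple_inter {a b c : V} (h : ({a, b, c} : Finset V).card = 3) (S : Finset V) :
    ({a, b, c} ∩ S : Finset V).card =
      (if a ∈ S then 1 else 0) + (if b ∈ S then 1 else 0) + (if c ∈ S then 1 else 0) := by
  obtain ⟨hab, hac, hbc⟩ := card_triple_eq_three_iff.1 h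
  rw [← filter_mem_eq_inter, card_filter, sum_insert (by simp [hab, hac]),
    sum_insert (by simp [hbc]), sum_singleton, add_assoc]

lemma eq_triple_of_mem {s : Finset V} (hs : s.card = 3) {a b c : V} (ha : a ∈ s) (hb : b ∈ s)
    (hc : c ∈ s) (hab : a ≠ b) (hac : a ≠ c) (hbc : b ≠ c) : s = {a, b, c} :=
  (eq_of_subset_of_card_le (by simp [insert_subset_iff, ha, hb, hc])
    (by rw [hs, card_triple_eq_three_iff.2 ⟨hab, hac, hbc⟩])).symm

lemma card_tripleNodes_inter_le (t : V × V × V) (S : Finset V) :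
    (tripleNodes t ∩ S).card ≤ 3 :=
  (card_le_card inter_subset_left).trans card_le_three

lemma card_inter_tripleNodes_le (S : Finset V) (t : V × V × V) :
    (S ∩ tripleNodes t).card ≤ 3 :=
  (card_le_card inter_subset_right).trans card_le_three

def IsP2 (G : SimpleGraph V) (t : V × V × V) : Prop :=
  (tripleNodes t).card = 3 ∧ G.Adj t.1 t.2.1 ∧ G.Adj t.2.1 t.2.2

lemma IsP2.exists_eq_of_mem {t : V × V × V} (ht : IsP2 G t) {y : V} (hy : y ∈ tripleNodes t) :
    ∃ n d, tripleNodes t = {y, n, d} ∧ G.Adj n y := by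
  obtain ⟨a, b, c⟩ := t
  obtain ⟨-, hab, hbc⟩ := ht
  simp only [tripleNodes, mem_insert, mem_singleton] at hy ⊢
  rcases hy with rfl | rfl | rfl
  · exact ⟨b, c, rfl, hab.symm⟩
  · exact ⟨a, c, insert_comm _ _ _, hab⟩
  · exact ⟨b, a, by ext; simp; tauto, hbc⟩

lemma IsP2.exists_adj {t : V × V × V} (ht : IsP2 G t) {a : V} (ha : a ∈ tripleNodes t) :
    ∃ b ∈ tripleNodes t, G.Adj b a := by
  obtain ⟨n, d, h, hn⟩ := ht.exists_eq_of_mem ha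
  exact ⟨n, by simp [h], hn⟩

def pathNodes {t : ℕ} (Q : Fin t → V × V × V) : Finset V :=
  univ.biUnion fun i => tripleNodes (Q i)

lemma mem_pathNodes {t : ℕ} {Q : Fin t → V × V × V} {a : V} :
    a ∈ pathNodes Q ↔ ∃ i, a ∈ tripleNodes (Q i) := by
  simp [pathNodes]

lemma tripleNodes_subset_pathNodes {t : ℕ} (Q : Fin t → V × V × V) (i : Fin t) :
    tripleNodes (Q i) ⊆ pathNodes Q :=
  fun _ ha => mem_pathNodes.2 ⟨i, ha⟩

lemma pathNodes_update_subset {t : ℕ} (Q : Fin t → V × V × V) (i : Fin t) (r : V × V × V) :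
    pathNodes (update Q i r) ⊆ pathNodes Q ∪ tripleNodes r := by
  intro a ha
  obtain ⟨j, hj⟩ := mem_pathNodes.1 ha
  rcases eq_or_ne j i with rfl | hji
  · simp_all
  · rw [update_of_ne hji] at hj
    exact mem_union_left _ (tripleNodes_subset_pathNodes Q j hj)

lemma sum_comp_update_add {ι M α : Type*} [Fintype ι] [DecidableEq ι] [AddCommMonoid M]
    (f : α → M) (Q : ι → α) (i : ι) (r : α) :
    ∑ j, f (update Q i r j) + f (Q i) = ∑ j, f (Q j) + f r := by
  rw [← comp_def f, comp_update, sum_update_of_mem (mem_univ i),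
    ← add_sum_erase univ _ (mem_univ i), sdiff_singleton_eq_erase]
  simp only [comp_apply]
  abel

namespace IsP2Packing

variable {Q : Fin k → V × V × V}

lemma isP2 (hQ : IsP2Packing G k Q) (i : Fin k) : IsP2 G (Q i) := hQ.1 i

lemma eq_of_mem (hQ : IsP2Packing G k Q) {a : V} {i j : Fin k} (hi : a ∈ tripleNodes (Q i))
    (hj : a ∈ tripleNodes (Q j)) : i = j :=
  by_contra fun h => disjoint_left.1 (hQ.2 i j h) hi hj

lemma card_pathNodes_inter (hQ : IsP2Packing G k Q) (S : Finset V) :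
    (pathNodes Q ∩ S).card = ∑ i, (tripleNodes (Q i) ∩ S).card := by
  rw [pathNodes, biUnion_inter, card_biUnion]
  exact fun i _ j _ h => (hQ.2 i j h).mono inter_subset_left inter_subset_left

lemma card_pathNodes (hQ : IsP2Packing G k Q) : (pathNodes Q).card = 3 * k := by
  rw [pathNodes, card_biUnion fun i _ j _ h => hQ.2 i j h]
  simp [fun i => (hQ.isP2 i).1, mul_comm]

lemma replace (hQ : IsP2Packing G k Q) {i : Fin k} {r : V × V × V} (hr : IsP2 G r)
    (h : ∀ a ∈ tripleNodes r, a ∉ pathNodes Q ∨ a ∈ tripleNodes (Q i)) :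
    IsP2Packing G k (update Q i r) := by
  have hdisj : ∀ j, j ≠ i → Disjoint (tripleNodes r) (tripleNodes (Q j)) := by
    refine fun j hji => disjoint_left.2 fun a ha haj => ?_
    rcases h a ha with hQa | hia
    · exact hQa (tripleNodes_subset_pathNodes Q j haj)
    · exact hji (hQ.eq_of_mem haj hia)
  refine ⟨fun j => ?_, fun j j' hjj' => ?_⟩
  · rcases eq_or_ne j i with rfl | hji
    · rw [update_self]; exact hr
    · rw [update_of_ne hji]; exact hQ.isP2 j
  · rcases eq_or_ne j i with rfl | hji
    · rw [update_self, update_of_ne hjj'.symm]; exact hdisj j' hjj'.symm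
    rcases eq_or_ne j' i with rfl | hj'i
    · rw [update_self, update_of_ne hji]; exact (hdisj j hji).symm
    · rw [update_of_ne hji, update_of_ne hj'i]; exact hQ.2 j j' hjj'

lemma card_pathNodes_update_inter (hQ : IsP2Packing G k Q) {i : Fin k} {r : V × V × V}
    (hQ' : IsP2Packing G k (update Q i r)) (S : Finset V) :
    (pathNodes (update Q i r) ∩ S).card + (tripleNodes (Q i) ∩ S).card =
      (pathNodes Q ∩ S).card + (tripleNodes r ∩ S).card := by
  rw [hQ.card_pathNodes_inter, hQ'.card_pathNodes_inter]
  exact sum_comp_update_add (fun t => (tripleNodes t ∩ S).card) Q i r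

lemma card_pathNodes_inter_eq_sum_filter (hQ : IsP2Packing G k Q) (S : Finset V) :
    (pathNodes Q ∩ S).card =
      ∑ i with (tripleNodes (Q i) ∩ S).Nonempty, (tripleNodes (Q i) ∩ S).card := by
  simp_rw [hQ.card_pathNodes_inter, ← card_ne_zero, sum_filter_ne_zero]

lemma card_filter_le_card_pathNodes_inter (hQ : IsP2Packing G k Q) (S : Finset V) :
    #{i | (tripleNodes (Q i) ∩ S).Nonempty} ≤ (pathNodes Q ∩ S).card := by
  rw [hQ.card_pathNodes_inter_eq_sum_filter]
  simpa using card_nsmul_le_sum _ (fun i => (tripleNodes (Q i) ∩ S).card) 1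
    fun i hi => (mem_filter.1 hi).2.card_pos

lemma card_pathNodes_inter_le (hQ : IsP2Packing G k Q) (S : Finset V) :
    (pathNodes Q ∩ S).card ≤ 3 * #{i | (tripleNodes (Q i) ∩ S).Nonempty} := by
  rw [hQ.card_pathNodes_inter_eq_sum_filter, mul_comm, ← smul_eq_mul]
  exact sum_le_card_nsmul _ _ 3 fun i _ => card_tripleNodes_inter_le (Q i) S

end IsP2Packing

section Optimal

variable {P : Fin m → V × V × V} {Q : Fin k → V × V × V}

def IsPathOf (P : Fin m → V × V × V) (t : V × V × V) : Prop :=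
  ∃ l, tripleNodes t = tripleNodes (P l)

instance (P : Fin m → V × V × V) (t : V × V × V) : Decidable (IsPathOf P t) :=
  inferInstanceAs (Decidable (∃ l, tripleNodes t = tripleNodes (P l)))

lemma IsPathOf.subset {t : V × V × V} (ht : IsPathOf P t) : tripleNodes t ⊆ pathNodes P := by
  obtain ⟨l, hl⟩ := ht
  exact hl ▸ tripleNodes_subset_pathNodes P l

lemma IsP2Packing.tripleNodes_eq_of_isPathOf (hP : IsP2Packing G m P) {t : V × V × V}
    (ht : IsPathOf P t) {a : V} {l : Fin m} (hat : a ∈ tripleNodes t)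
    (hal : a ∈ tripleNodes (P l)) : tripleNodes t = tripleNodes (P l) := by
  obtain ⟨l', hl'⟩ := ht
  rw [hl'] at hat ⊢
  rw [hP.eq_of_mem hat hal]

/-- With the factor `2`, exchanging a single path of a packing never trades a node of
`pathNodes P` for a path of `P`. -/
def weight (P : Fin m → V × V × V) (t : V × V × V) : ℕ :=
  2 * (tripleNodes t ∩ pathNodes P).card + if IsPathOf P t then 1 else 0

def potential (P : Fin m → V × V × V) (Q : Fin k → V × V × V) : ℕ :=
  ∑ i, weight P (Q i)

lemma weight_le_six {t : V × V × V} (ht : ¬ IsPathOf P t) : weight P t ≤ 6 := by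
  have := card_tripleNodes_inter_le t (pathNodes P)
  simp only [weight, ht, if_false]
  omega

lemma IsP2Packing.weight_self (hP : IsP2Packing G m P) (l : Fin m) : weight P (P l) = 7 := by
  have hl : IsPathOf P (P l) := ⟨l, rfl⟩
  simp [weight, hl, inter_eq_left.2 hl.subset, (hP.isP2 l).1]

lemma potential_le_seven_mul (P : Fin m → V × V × V) (Q : Fin k → V × V × V) :
    potential P Q ≤ 7 * k := by
  have hw : ∀ t, weight P t ≤ 7 := fun t => by
    have := card_tripleNodes_inter_le t (pathNodes P)
    unfold weight
    split <;> omega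
  simpa [potential, mul_comm] using sum_le_sum fun i (_ : i ∈ univ) => hw (Q i)

structure IsOptimal (G : SimpleGraph V) (P : Fin m → V × V × V) (Q : Fin k → V × V × V) :
    Prop where
  isP2Packing : IsP2Packing G k Q
  potential_le : ∀ Q' : Fin k → V × V × V, IsP2Packing G k Q' → potential P Q' ≤ potential P Q

lemma exists_isOptimal (P : Fin m → V × V × V) (h : ∃ Q : Fin k → V × V × V, IsP2Packing G k Q) :
    ∃ Q : Fin k → V × V × V, IsOptimal G P Q := by
  let W : Set ℕ := {w | ∃ Q, IsP2Packing G k Q ∧ potential P Q = w}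
  have hW : BddAbove W := ⟨7 * k, by rintro _ ⟨Q, -, rfl⟩; exact potential_le_seven_mul P Q⟩
  obtain ⟨Q, hQ, hmax⟩ : sSup W ∈ W :=
    Nat.sSup_mem (let ⟨Q, hQ⟩ := h; ⟨_, Q, hQ, rfl⟩) hW
  exact ⟨Q, ⟨hQ, fun Q' hQ' => hmax ▸ le_csSup hW ⟨Q', hQ', rfl⟩⟩⟩

namespace IsOptimal

lemma weight_le (hopt : IsOptimal G P Q) {i : Fin k} {r : V × V × V}
    (h : IsP2Packing G k (update Q i r)) : weight P r ≤ weight P (Q i) := by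
  have := hopt.potential_le _ h
  have := sum_comp_update_add (weight P) Q i r
  simp only [potential] at *
  omega

lemma replace (hopt : IsOptimal G P Q) {i : Fin k} {r : V × V × V}
    (h : IsP2Packing G k (update Q i r)) (hw : weight P (Q i) ≤ weight P r) :
    IsOptimal G P (update Q i r) := by
  refine ⟨h, fun Q' hQ' => ?_⟩
  have := hopt.potential_le Q' hQ'
  have := sum_comp_update_add (weight P) Q i r
  simp only [potential] at *
  omega

lemma isPathOf_of_forall (hP : IsP2Packing G m P) (hopt : IsOptimal G P Q) {i : Fin k}
    {l : Fin m} (h : ∀ a ∈ tripleNodes (P l), a ∉ pathNodes Q ∨ a ∈ tripleNodes (Q i)) :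
    IsPathOf P (Q i) := by
  by_contra hi
  have := hopt.weight_le (hopt.isP2Packing.replace (hP.isP2 l) h)
  have := weight_le_six hi
  rw [hP.weight_self] at *
  omega

lemma two_le_card_inter (hmk : m < k) (hP : IsP2Packing G m P) (hopt : IsOptimal G P Q)
    (l : Fin m) : 2 ≤ (pathNodes Q ∩ tripleNodes (P l)).card := by
  have hQ := hopt.isP2Packing
  by_contra! hl
  rcases (pathNodes Q ∩ tripleNodes (P l)).eq_empty_or_nonempty with h0 | ⟨a, ha⟩
  · -- `Q` covers more nodes than `P`, so one of its paths is not a path of `P`.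
    obtain ⟨u, huQ, huP⟩ := exists_mem_notMem_of_card_lt_card
      (s := pathNodes P) (t := pathNodes Q) (by rw [hP.card_pathNodes, hQ.card_pathNodes]; omega)
    obtain ⟨i, hi⟩ := mem_pathNodes.1 huQ
    refine huP ((hopt.isPathOf_of_forall hP (l := l) fun b hb => Or.inl fun hbQ => ?_).subset hi)
    exact (eq_empty_iff_forall_notMem.1 h0) b (mem_inter.2 ⟨hbQ, hb⟩)
  · obtain ⟨haQ, hal⟩ := mem_inter.1 ha
    obtain ⟨i, hi⟩ := mem_pathNodes.1 haQ
    have hpath := hopt.isPathOf_of_forall hP (i := i) (l := l) fun b hb => by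
      by_cases hbQ : b ∈ pathNodes Q
      · exact Or.inr (card_le_one.1 (by omega) b (mem_inter.2 ⟨hbQ, hb⟩) a ha ▸ hi)
      · exact Or.inl hbQ
    have hsub : tripleNodes (P l) ⊆ pathNodes Q :=
      hP.tripleNodes_eq_of_isPathOf hpath hi hal ▸ tripleNodes_subset_pathNodes Q i
    rw [inter_eq_right.2 hsub, (hP.isP2 l).1] at hl
    omega

lemma card_inter_eq_three_of_update (hmk : m < k) (hP : IsP2Packing G m P)
    (hopt : IsOptimal G P Q) {i : Fin k} {r : V × V × V} (hopt' : IsOptimal G P (update Q i r))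
    {l : Fin m}
    (h : (tripleNodes r ∩ tripleNodes (P l)).card + 1 =
      (tripleNodes (Q i) ∩ tripleNodes (P l)).card) :
    (pathNodes Q ∩ tripleNodes (P l)).card = 3 := by
  have := hopt.isP2Packing.card_pathNodes_update_inter hopt'.isP2Packing (tripleNodes (P l))
  have := hopt'.two_le_card_inter hmk hP l
  have := card_inter_tripleNodes_le (pathNodes Q) (P l)
  omega

end IsOptimal

end Optimal

/-- Data for rerouting the path `Q i` on `{y, n, d}` to `n - y - z`, through the neighbour `z` of
`y` on `P l` that `Q` leaves uncovered. -/
structure IsSwap (G : SimpleGraph V) (P : Fin m → V × V × V) (Q : Fin k → V × V × V) (l : Fin m)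
    (i : Fin k) (y n d z : V) : Prop where
  mem_z : z ∈ tripleNodes (P l)
  notMem_pathNodes : z ∉ pathNodes Q
  mem_y : y ∈ tripleNodes (P l)
  adj_yz : G.Adj y z
  tripleNodes_eq : tripleNodes (Q i) = {y, n, d}
  adj_ny : G.Adj n y

namespace IsSwap

variable {P : Fin m → V × V × V} {Q : Fin k → V × V × V} {l : Fin m} {i : Fin k} {y n d z : V}

lemma mem_y_tripleNodes (hs : IsSwap G P Q l i y n d z) : y ∈ tripleNodes (Q i) := by
  simp [hs.tripleNodes_eq]

lemma mem_n_tripleNodes (hs : IsSwap G P Q l i y n d z) : n ∈ tripleNodes (Q i) := by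
  simp [hs.tripleNodes_eq]

lemma mem_d_tripleNodes (hs : IsSwap G P Q l i y n d z) : d ∈ tripleNodes (Q i) := by
  simp [hs.tripleNodes_eq]

lemma not_isPathOf (hP : IsP2Packing G m P) (hs : IsSwap G P Q l i y n d z) :
    ¬ IsPathOf P (Q i) := fun h =>
  hs.notMem_pathNodes (tripleNodes_subset_pathNodes Q i
    (hP.tripleNodes_eq_of_isPathOf h hs.mem_y_tripleNodes hs.mem_y ▸ hs.mem_z))

lemma isP2 (hs : IsSwap G P Q l i y n d z) : IsP2 G (n, y, z) := by
  have hnz : n ≠ z := fun h =>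
    hs.notMem_pathNodes (h ▸ tripleNodes_subset_pathNodes Q i hs.mem_n_tripleNodes)
  exact ⟨card_triple_eq_three_iff.2 ⟨hs.adj_ny.ne, hnz, hs.adj_yz.ne⟩, hs.adj_ny, hs.adj_yz⟩

lemma isP2Packing (hQ : IsP2Packing G k Q) (hs : IsSwap G P Q l i y n d z) :
    IsP2Packing G k (update Q i (n, y, z)) := by
  refine hQ.replace hs.isP2 fun a ha => ?_
  simp only [tripleNodes, mem_insert, mem_singleton] at ha
  rcases ha with rfl | rfl | rfl
  · exact Or.inr hs.mem_n_tripleNodes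
  · exact Or.inr hs.mem_y_tripleNodes
  · exact Or.inl hs.notMem_pathNodes

lemma card_tripleNodes_inter (hQ : IsP2Packing G k Q) (hs : IsSwap G P Q l i y n d z)
    (S : Finset V) :
    (tripleNodes (Q i) ∩ S).card + (if z ∈ S then 1 else 0) =
      (tripleNodes (n, y, z) ∩ S).card + (if d ∈ S then 1 else 0) := by
  have h3 := (hQ.isP2 i).1
  have h3' : ({n, y, z} : Finset V).card = 3 := hs.isP2.1
  rw [hs.tripleNodes_eq] at h3 ⊢
  rw [tripleNodes, card_triple_inter h3, card_triple_inter h3']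
  omega

lemma card_pathNodes_inter (hQ : IsP2Packing G k Q) (hs : IsSwap G P Q l i y n d z)
    (S : Finset V) :
    (pathNodes (update Q i (n, y, z)) ∩ S).card + (if d ∈ S then 1 else 0) =
      (pathNodes Q ∩ S).card + (if z ∈ S then 1 else 0) := by
  have := hQ.card_pathNodes_update_inter (hs.isP2Packing hQ) S
  have := hs.card_tripleNodes_inter hQ S
  omega

lemma replace (hs : IsSwap G P Q l i y n d z) {i' : Fin k} {r : V × V × V} (hi : i ≠ i')
    (hz : z ∉ tripleNodes r) : IsSwap G P (update Q i' r) l i y n d z where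
  mem_z := hs.mem_z
  notMem_pathNodes h := (mem_union.1 (pathNodes_update_subset Q i' r h)).elim
    hs.notMem_pathNodes hz
  mem_y := hs.mem_y
  adj_yz := hs.adj_yz
  tripleNodes_eq := by rw [update_of_ne hi, hs.tripleNodes_eq]
  adj_ny := hs.adj_ny

lemma exists_of_card_inter_eq_two (hP : IsP2Packing G m P) (hQ : IsP2Packing G k Q)
    (hl : (pathNodes Q ∩ tripleNodes (P l)).card = 2) :
    ∃ i y n d z, IsSwap G P Q l i y n d z := by
  have hsd : (tripleNodes (P l) \ pathNodes Q).card = 1 := by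
    have := card_inter_add_card_sdiff (tripleNodes (P l)) (pathNodes Q)
    rw [inter_comm, hl, (hP.isP2 l).1] at this
    omega
  obtain ⟨z, hz⟩ := card_eq_one.1 hsd
  obtain ⟨hzl, hzQ⟩ := mem_sdiff.1 (hz ▸ mem_singleton_self z)
  obtain ⟨y, hyl, hyz⟩ := (hP.isP2 l).exists_adj hzl
  have hyQ : y ∈ pathNodes Q := by
    by_contra hyQ
    exact hyz.ne (mem_singleton.1 (hz ▸ mem_sdiff.2 ⟨hyl, hyQ⟩))
  obtain ⟨i, hi⟩ := mem_pathNodes.1 hyQ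
  obtain ⟨n, d, hT, hny⟩ := (hQ.isP2 i).exists_eq_of_mem hi
  exact ⟨i, y, n, d, z, hzl, hzQ, hyl, hyz, hT, hny⟩

end IsSwap

namespace IsOptimal

variable {P : Fin m → V × V × V} {Q : Fin k → V × V × V} {l : Fin m} {i : Fin k} {y n d z : V}

lemma mem_pathNodes_of_isSwap (hP : IsP2Packing G m P) (hopt : IsOptimal G P Q)
    (hs : IsSwap G P Q l i y n d z) : d ∈ pathNodes P := by
  have hX := hs.card_tripleNodes_inter hopt.isP2Packing (pathNodes P)
  have hle := hopt.weight_le (hs.isP2Packing hopt.isP2Packing)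
  rw [if_pos (tripleNodes_subset_pathNodes P l hs.mem_z)] at hX
  simp only [weight, if_neg (hs.not_isPathOf hP)] at hle
  by_contra hd
  rw [if_neg hd] at hX
  omega

lemma swap (hP : IsP2Packing G m P) (hopt : IsOptimal G P Q) (hs : IsSwap G P Q l i y n d z) :
    IsOptimal G P (update Q i (n, y, z)) := by
  refine hopt.replace (hs.isP2Packing hopt.isP2Packing) ?_
  have hX := hs.card_tripleNodes_inter hopt.isP2Packing (pathNodes P)
  rw [if_pos (tripleNodes_subset_pathNodes P l hs.mem_z),
    if_pos (hopt.mem_pathNodes_of_isSwap hP hs)] at hX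
  simp only [weight, if_neg (hs.not_isPathOf hP)]
  omega

lemma notMem_of_isSwap (hP : IsP2Packing G m P) (hopt : IsOptimal G P Q)
    (hs : IsSwap G P Q l i y n d z) : d ∉ tripleNodes (P l) := fun hdl => by
  have hyd := (card_triple_eq_three_iff.1
    (hs.tripleNodes_eq ▸ (hopt.isP2Packing.isP2 i).1)).2.1
  have hzd : z ≠ d := fun h =>
    hs.notMem_pathNodes (h ▸ tripleNodes_subset_pathNodes Q i hs.mem_d_tripleNodes)
  have hl := eq_triple_of_mem (hP.isP2 l).1 hs.mem_z hs.mem_y hdl hs.adj_yz.ne.symm hzd hyd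
  refine hs.not_isPathOf hP (hopt.isPathOf_of_forall hP (l := l) fun a ha => ?_)
  simp only [hl, mem_insert, mem_singleton] at ha
  rcases ha with rfl | rfl | rfl
  · exact Or.inl hs.notMem_pathNodes
  · exact Or.inr hs.mem_y_tripleNodes
  · exact Or.inr hs.mem_d_tripleNodes

lemma card_inter_eq_three_of_isSwap (hmk : m < k) (hP : IsP2Packing G m P)
    (hopt : IsOptimal G P Q) (hs : IsSwap G P Q l i y n d z) {l' : Fin m}
    (hd : d ∈ tripleNodes (P l')) : (pathNodes Q ∩ tripleNodes (P l')).card = 3 := by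
  have hl : l ≠ l' := fun h => hopt.notMem_of_isSwap hP hs (h ▸ hd)
  have hz : z ∉ tripleNodes (P l') := fun h => hl (hP.eq_of_mem hs.mem_z h)
  refine hopt.card_inter_eq_three_of_update hmk hP (hopt.swap hP hs) ?_
  have := hs.card_tripleNodes_inter hopt.isP2Packing (tripleNodes (P l'))
  rw [if_neg hz, if_pos hd] at this
  omega

lemma card_inter_eq_three_of_exchange (hmk : m < k) (hP : IsP2Packing G m P)
    (hopt : IsOptimal G P Q) {l₁ l₂ : Fin m} {y₁ y₂ : V} (h₁₂ : l₁ ≠ l₂)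
    (hz : z ∈ tripleNodes (P l₁)) (hzQ : z ∉ pathNodes Q) (hy₁ : y₁ ∈ tripleNodes (P l₁))
    (hyz : G.Adj y₁ z) (hy₂ : y₂ ∈ tripleNodes (P l₂)) (hd₁ : d ∉ tripleNodes (P l₁))
    (hd₂ : d ∉ tripleNodes (P l₂)) (hy₁i : y₁ ∈ tripleNodes (Q i))
    (hy₂i : y₂ ∈ tripleNodes (Q i)) (hdi : d ∈ tripleNodes (Q i)) (hyd : G.Adj y₁ d) :
    (pathNodes Q ∩ tripleNodes (P l₂)).card = 3 := by
  have hQ := hopt.isP2Packing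
  have hy₂₁ : y₂ ∉ tripleNodes (P l₁) := fun h => h₁₂ (hP.eq_of_mem h hy₂)
  have hy₁₂ : y₁ ∉ tripleNodes (P l₂) := fun h => h₁₂ (hP.eq_of_mem hy₁ h)
  have hz₂ : z ∉ tripleNodes (P l₂) := fun h => h₁₂ (hP.eq_of_mem hz h)
  have hT := eq_triple_of_mem (hQ.isP2 i).1 hy₁i hy₂i hdi (fun h => hy₂₁ (h ▸ hy₁))
    (fun h => hd₁ (h ▸ hy₁)) (fun h => hd₂ (h ▸ hy₂))
  have h3Q : ({y₁, y₂, d} : Finset V).card = 3 := hT ▸ (hQ.isP2 i).1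
  have hzd : z ≠ d := fun h => hzQ (h ▸ tripleNodes_subset_pathNodes Q i hdi)
  have h3 : ({z, y₁, d} : Finset V).card = 3 :=
    card_triple_eq_three_iff.2 ⟨hyz.ne.symm, hzd, fun h => hd₁ (h ▸ hy₁)⟩
  have hQ' : IsP2Packing G k (update Q i (z, y₁, d)) := by
    refine hQ.replace ⟨h3, hyz.symm, hyd⟩ fun a ha => ?_
    simp only [tripleNodes, mem_insert, mem_singleton] at ha
    rcases ha with rfl | rfl | rfl
    · exact Or.inl hzQ
    · exact Or.inr hy₁i
    · exact Or.inr hdi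
  have hw : weight P (Q i) ≤ weight P (z, y₁, d) := by
    have hnot : ¬ IsPathOf P (Q i) := fun h =>
      hy₂₁ (hP.tripleNodes_eq_of_isPathOf h hy₁i hy₁ ▸ hy₂i)
    rw [weight, weight, if_neg hnot, hT, show tripleNodes (z, y₁, d) = {z, y₁, d} from rfl,
      card_triple_inter h3Q, card_triple_inter h3]
    simp only [tripleNodes_subset_pathNodes P l₁ hz, tripleNodes_subset_pathNodes P l₁ hy₁,
      tripleNodes_subset_pathNodes P l₂ hy₂, if_true]
    omega
  refine hopt.card_inter_eq_three_of_update hmk hP (hopt.replace hQ' hw) ?_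
  rw [hT, show tripleNodes (z, y₁, d) = {z, y₁, d} from rfl, card_triple_inter h3Q,
    card_triple_inter h3]
  simp only [hz₂, hy₁₂, hy₂, hd₂, if_true, if_false]

lemma eq_of_isSwap (hmk : m < k) (hP : IsP2Packing G m P) (hopt : IsOptimal G P Q)
    {l₁ l₂ : Fin m} {i₁ i₂ : Fin k} {y₁ n₁ d₁ z₁ y₂ n₂ d₂ z₂ : V}
    (hs₁ : IsSwap G P Q l₁ i₁ y₁ n₁ d₁ z₁) (hs₂ : IsSwap G P Q l₂ i₂ y₂ n₂ d₂ z₂)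
    (hc₁ : (pathNodes Q ∩ tripleNodes (P l₁)).card = 2)
    (hc₂ : (pathNodes Q ∩ tripleNodes (P l₂)).card = 2)
    (hd₁ : d₁ ∈ tripleNodes (P l)) (hd₂ : d₂ ∈ tripleNodes (P l)) : l₁ = l₂ := by
  by_contra h₁₂
  have hQ := hopt.isP2Packing
  have hl₁ : l₁ ≠ l := fun h => hopt.notMem_of_isSwap hP hs₁ (h ▸ hd₁)
  have hl₂ : l₂ ≠ l := fun h => hopt.notMem_of_isSwap hP hs₂ (h ▸ hd₂)
  rcases eq_or_ne i₁ i₂ with rfl | hi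
  -- If both swaps reroute the same path, it is `{y₁, y₂, d₁}`; rerouting it through the `z` of
  -- whichever `P lⱼ` contains the neighbour of `d₁` uncovers a node of the other path.
  · have hd₁₂ : d₁ ∉ tripleNodes (P l₂) := fun h => hl₂ (hP.eq_of_mem h hd₁)
    have hny : n₁ = y₂ := by
      have := hs₂.mem_y_tripleNodes
      simp only [hs₁.tripleNodes_eq, mem_insert, mem_singleton] at this
      rcases this with h | h | h
      · exact absurd (hP.eq_of_mem hs₁.mem_y (h ▸ hs₂.mem_y)) h₁₂
      · exact h.symm
      · exact absurd (h ▸ hs₂.mem_y) hd₁₂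
    obtain ⟨b, hb, hbd⟩ := (hQ.isP2 i₁).exists_adj hs₁.mem_d_tripleNodes
    simp only [hs₁.tripleNodes_eq, hny, mem_insert, mem_singleton] at hb
    rcases hb with rfl | rfl | rfl
    · have := hopt.card_inter_eq_three_of_exchange hmk hP h₁₂ hs₁.mem_z hs₁.notMem_pathNodes
        hs₁.mem_y hs₁.adj_yz hs₂.mem_y (hopt.notMem_of_isSwap hP hs₁) hd₁₂
        hs₁.mem_y_tripleNodes hs₂.mem_y_tripleNodes hs₁.mem_d_tripleNodes hbd
      omega
    · have := hopt.card_inter_eq_three_of_exchange hmk hP (Ne.symm h₁₂) hs₂.mem_z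
        hs₂.notMem_pathNodes hs₂.mem_y hs₂.adj_yz hs₁.mem_y hd₁₂
        (hopt.notMem_of_isSwap hP hs₁) hs₂.mem_y_tripleNodes hs₁.mem_y_tripleNodes
        hs₁.mem_d_tripleNodes hbd
      omega
    · exact hbd.ne rfl
  · have hz₂ : z₂ ∉ tripleNodes (n₁, y₁, z₁) := by
      simp only [tripleNodes, mem_insert, mem_singleton, not_or]
      refine ⟨fun h => ?_, fun h => ?_, fun h => h₁₂ (hP.eq_of_mem hs₁.mem_z (h ▸ hs₂.mem_z))⟩
      · exact hs₂.notMem_pathNodes (h ▸ tripleNodes_subset_pathNodes Q i₁ hs₁.mem_n_tripleNodes)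
      · exact hs₂.notMem_pathNodes (h ▸ tripleNodes_subset_pathNodes Q i₁ hs₁.mem_y_tripleNodes)
    -- Performing both swaps would leave only one node of `P l` covered.
    have hfull := (hopt.swap hP hs₁).card_inter_eq_three_of_isSwap hmk hP
      (hs₂.replace hi.symm hz₂) hd₂
    have hdrop := hs₁.card_pathNodes_inter hQ (tripleNodes (P l))
    rw [if_pos hd₁, if_neg fun h => hl₁ (hP.eq_of_mem hs₁.mem_z h)] at hdrop
    have := card_inter_tripleNodes_le (pathNodes Q) (P l)
    omega

lemma card_filter_eq_two_le (hmk : m < k) (hP : IsP2Packing G m P) (hopt : IsOptimal G P Q) :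
    #{l | (pathNodes Q ∩ tripleNodes (P l)).card = 2} ≤
      #{l | (pathNodes Q ∩ tripleNodes (P l)).card = 3} := by
  have htarget : ∀ l, ∃ l', (pathNodes Q ∩ tripleNodes (P l)).card = 2 →
      (pathNodes Q ∩ tripleNodes (P l')).card = 3 ∧
        ∃ i y n d z, IsSwap G P Q l i y n d z ∧ d ∈ tripleNodes (P l') := fun l => by
    by_cases hl : (pathNodes Q ∩ tripleNodes (P l)).card = 2
    · obtain ⟨i, y, n, d, z, hs⟩ := IsSwap.exists_of_card_inter_eq_two hP hopt.isP2Packing hl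
      obtain ⟨l', hl'⟩ := mem_pathNodes.1 (hopt.mem_pathNodes_of_isSwap hP hs)
      exact ⟨l', fun _ =>
        ⟨hopt.card_inter_eq_three_of_isSwap hmk hP hs hl', i, y, n, d, z, hs, hl'⟩⟩
    · exact ⟨l, fun h => absurd h hl⟩
  choose f hf using htarget
  refine card_le_card_of_injOn f (fun l hl => ?_) fun l₁ hl₁ l₂ hl₂ h => ?_
  · simpa using (hf l (by simpa using hl)).1
  · have h₁ : (pathNodes Q ∩ tripleNodes (P l₁)).card = 2 := by simpa using hl₁
    have h₂ : (pathNodes Q ∩ tripleNodes (P l₂)).card = 2 := by simpa using hl₂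
    obtain ⟨-, _, _, _, _, _, hs₁, hd₁⟩ := hf l₁ h₁
    obtain ⟨-, _, _, _, _, _, hs₂, hd₂⟩ := hf l₂ h₂
    exact hopt.eq_of_isSwap hmk hP hs₁ hs₂ h₁ h₂ hd₁ (h ▸ hd₂)

lemma five_mul_le (hmk : m < k) (hP : IsP2Packing G m P) (hopt : IsOptimal G P Q) :
    5 * m ≤ 2 * (pathNodes Q ∩ pathNodes P).card := by
  set c : Fin m → ℕ := fun l => (pathNodes Q ∩ tripleNodes (P l)).card with hc
  have hc23 : ∀ l, c l = 2 ∨ c l = 3 := fun l => by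
    have : 2 ≤ c l := hopt.two_le_card_inter hmk hP l
    have : c l ≤ 3 := card_inter_tripleNodes_le (pathNodes Q) (P l)
    omega
  have hsum : (pathNodes Q ∩ pathNodes P).card = ∑ l, c l := by
    rw [inter_comm, hP.card_pathNodes_inter]
    simp_rw [hc, inter_comm]
  have hfull : univ.filter (fun l => ¬ c l = 2) = univ.filter fun l => c l = 3 :=
    filter_congr fun l _ => by have := hc23 l; omega
  have hcard := card_filter_add_card_filter_not (s := univ) (c · = 2)
  rw [hfull, card_univ, Fintype.card_fin] at hcard
  have hle : #{l | c l = 2} ≤ #{l | c l = 3} := hopt.card_filter_eq_two_le hmk hP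
  rw [hsum, ← sum_filter_add_sum_filter_not univ (c · = 2), hfull,
    sum_const_nat fun l hl => (mem_filter.1 hl).2, sum_const_nat fun l hl => (mem_filter.1 hl).2]
  omega

end IsOptimal

lemma exists_isP2Packing_five_mul_le {P : Fin m → V × V × V} (hmk : m < k)
    (hP : IsP2Packing G m P) (h : ∃ Q : Fin k → V × V × V, IsP2Packing G k Q) :
    ∃ Q : Fin k → V × V × V, IsP2Packing G k Q ∧
      5 * m ≤ 2 * (pathNodes Q ∩ pathNodes P).card :=
  let ⟨Q, hopt⟩ := exists_isOptimal P h
  ⟨Q, hopt.isP2Packing, hopt.five_mul_le hmk hP⟩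

end

theorem stmt13 [DecidableEq V] [Fintype V] (G : SimpleGraph V) (k : ℕ) (hk : 1 ≤ k)
    (P : Fin (k - 1) → V × V × V) (hP : IsP2Packing G (k - 1) P) :
    (∃ Q : Fin k → V × V × V, IsP2Packing G k Q) ↔
    (∃ p q : ℕ, 3 ≤ p ∧ p ≤ 3 * k - (5 * (k - 1) + 1) / 2 ∧
      (p + 2) / 3 ≤ q ∧ q ≤ p ∧
      ∃ Q : Fin k → V × V × V, IsP2Packing G k Q ∧
        ((Finset.univ.biUnion fun i => tripleNodes (Q i)) ∩
          (Finset.univ \ Finset.univ.biUnion fun i => tripleNodes (P i))).card = p ∧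
        (Finset.univ.filter fun i : Fin k =>
          (tripleNodes (Q i) ∩
            (Finset.univ \ Finset.univ.biUnion fun j => tripleNodes (P j))).Nonempty).card
          = q) := by
  refine ⟨fun h => ?_, fun ⟨_, _, _, _, _, _, Q, hQ, _⟩ => ⟨Q, hQ⟩⟩
  obtain ⟨Q, hQ, h5⟩ := exists_isP2Packing_five_mul_le (by omega) hP h
  set Y := univ \ pathNodes P
  have hsplit : (pathNodes Q ∩ pathNodes P).card + (pathNodes Q ∩ Y).card = 3 * k := by
    have hY : pathNodes Q ∩ Y = pathNodes Q \ pathNodes P := by ext; simp [Y]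
    rw [hY, card_inter_add_card_sdiff, hQ.card_pathNodes]
  have hX : (pathNodes Q ∩ pathNodes P).card ≤ 3 * (k - 1) :=
    (card_le_card inter_subset_right).trans hP.card_pathNodes.le
  have hq := hQ.card_filter_le_card_pathNodes_inter Y
  have hp := hQ.card_pathNodes_inter_le Y
  exact ⟨(pathNodes Q ∩ Y).card, #{i | (tripleNodes (Q i) ∩ Y).Nonempty}, by omega, by omega,
    by omega, hq, Q, hQ, rfl, rfl⟩
end
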